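/- arXiv:2006.11756 — 5 statements merged into one kernel-verified Lean document; each statement's English description precedes it below -/
import Mathlib

section
/- For ξ ~ Multinomial(m, x) with x ∈ S_d, and for any δ > 0, there exist constants c_d, C_d > 0 (depending only on d) such that ∑_{k : ‖k/m − x‖₁ > δ} P_{k,m}(x) ≤ C_d e^{−c_d δ² m} for all m ≥ 1, uniformly in x ∈ S_d. -/
open scoped BigOperators Classical
open Finset Real Filter MeasureTheory

/-- Multinomial(m, x) probability mass at k. -/
noncomputable def multinomialPMF (d m : ℕ) (x : Fin d → ℝ) (k : Fin d → ℕ) : ℝ :=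
  ((m.factorial : ℝ) / (((m - ∑ i, k i).factorial : ℝ) * ∏ i, ((k i).factorial : ℝ))) *
    (1 - ∑ i, x i) ^ (m - ∑ i, k i) * ∏ i, (x i) ^ (k i)

/-- The index set ℕ₀^d ∩ m·S_d. -/
noncomputable def multiIndex (d m : ℕ) : Finset (Fin d → ℕ) :=
  (Fintype.piFinset fun _ => Finset.range (m + 1)).filter fun k => ∑ i, k i ≤ m

/-- The d-dimensional unit simplex. -/
def simplex (d : ℕ) : Set (Fin d → ℝ) :=
  {x | (∀ i, 0 ≤ x i ∧ x i ≤ 1) ∧ ∑ i, x i ≤ 1}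

/-!
The multinomial coefficient of `k` is one term of the multinomial expansion of `m ^ m`, so
`P_k(p) ≤ ∏ (m p_j / k_j) ^ k_j = exp (-m KL(k/m ‖ p))`. Applying `log t ≤ 2 (√t - 1)` termwise
bounds this Kullback–Leibler divergence below by `2 (1 - ∑ √(p_j k_j / m))`, which by Cauchy–Schwarz
dominates `‖k/m - p‖₁² / 4`. Hence every term of the tail is at most `exp (-m δ² / 4)`, and there
are at most `(m + 1) ^ d` of them, a polynomial factor absorbed by half of the exponent.
-/

theorem Nat.multinomial_mul_prod_pow_le {ι : Type*} [Fintype ι] (k : ι → ℕ) :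
    Nat.multinomial univ k * ∏ j, k j ^ k j ≤ (∑ j, k j) ^ ∑ j, k j := by
  classical
  rw [sum_pow_eq_sum_piAntidiag univ k]
  exact single_le_sum (f := fun g => Nat.multinomial univ g * ∏ j, k j ^ g j)
    (fun _ _ => Nat.zero_le _) (mem_piAntidiag.2 ⟨rfl, fun j _ => mem_univ j⟩)

theorem multinomial_mul_prod_pow_le_prod_div_pow {ι : Type*} [Fintype ι]
    (k : ι → ℕ) {p : ι → ℝ} (hp : ∀ j, 0 ≤ p j) :
    (Nat.multinomial univ k : ℝ) * ∏ j, p j ^ k j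
      ≤ ∏ j, ((∑ i, k i : ℕ) * p j / k j) ^ k j := by
  have hkk : (0 : ℝ) < ∏ j, (k j : ℝ) ^ k j := prod_pos fun j _ => by
    rcases (k j).eq_zero_or_pos with h | h
    · simp [h]
    · positivity
  have hcoeff : (Nat.multinomial univ k : ℝ) * ∏ j, (k j : ℝ) ^ k j
      ≤ ((∑ i, k i : ℕ) : ℝ) ^ ∑ i, k i := by
    exact_mod_cast Nat.multinomial_mul_prod_pow_le k
  simp_rw [div_pow, mul_pow]
  rw [prod_div_distrib, prod_mul_distrib, prod_pow_eq_pow_sum, le_div_iff₀ hkk]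
  calc (Nat.multinomial univ k : ℝ) * (∏ j, p j ^ k j) * ∏ j, (k j : ℝ) ^ k j
      = (Nat.multinomial univ k * ∏ j, (k j : ℝ) ^ k j) * ∏ j, p j ^ k j := by ring
    _ ≤ _ := mul_le_mul_of_nonneg_right hcoeff (prod_nonneg fun j _ => pow_nonneg (hp j) _)

theorem Real.log_le_two_mul_sqrt_sub_one {t : ℝ} (ht : 0 < t) : log t ≤ 2 * (√t - 1) := by
  have h := log_le_sub_one_of_pos (sqrt_pos.2 ht)
  rw [log_sqrt ht.le] at h
  linarith

theorem div_pow_self_le_exp {c : ℝ} (hc : 0 ≤ c) (K : ℕ) :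
    (c / K) ^ K ≤ exp (2 * √(c * K) - 2 * K) := by
  rcases K.eq_zero_or_pos with rfl | hK
  · simp
  rcases hc.eq_or_lt with rfl | hc
  · rw [zero_div, zero_pow hK.ne']
    exact (exp_pos _).le
  have hKR : (0 : ℝ) < K := by exact_mod_cast hK
  have hsqrt : (K : ℝ) * √(c / K) = √(c * K) := by
    rw [show c * K = K ^ 2 * (c / K) by field_simp, sqrt_mul (sq_nonneg _), sqrt_sq hKR.le]
  calc (c / K) ^ K = exp (K * log (c / K)) := by
        rw [← log_pow, exp_log (by positivity)]
    _ ≤ exp (K * (2 * (√(c / K) - 1))) := by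
        gcongr
        exact log_le_two_mul_sqrt_sub_one (by positivity)
    _ = exp (2 * √(c * K) - 2 * K) := by rw [← hsqrt]; ring_nf

theorem sum_abs_sub_sq_le_eight_mul_one_sub_sum_sqrt_mul {ι : Type*} [Fintype ι]
    {p q : ι → ℝ} (hp : ∀ j, 0 ≤ p j) (hq : ∀ j, 0 ≤ q j)
    (hps : ∑ j, p j = 1) (hqs : ∑ j, q j = 1) :
    (∑ j, |q j - p j|) ^ 2 ≤ 8 * (1 - ∑ j, √(p j * q j)) := by
  have hp2 j := sq_sqrt (hp j)
  have hq2 j := sq_sqrt (hq j)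
  have hfactor j : |q j - p j| = |√(q j) - √(p j)| * (√(q j) + √(p j)) := by
    rw [← abs_of_nonneg (by positivity : 0 ≤ √(q j) + √(p j)), ← abs_mul]
    congr 1
    nlinarith [hp2 j, hq2 j]
  have hhellinger : ∑ j, |√(q j) - √(p j)| ^ 2 = 2 * (1 - ∑ j, √(p j * q j)) := by
    have h j : |√(q j) - √(p j)| ^ 2 = q j + p j - 2 * √(p j * q j) := by
      rw [sq_abs, sqrt_mul (hp j)]
      nlinarith [hp2 j, hq2 j]
    simp only [h, sum_sub_distrib, sum_add_distrib, hps, hqs, ← mul_sum]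
    ring
  have hsum_sq : ∑ j, (√(q j) + √(p j)) ^ 2 ≤ 4 := by
    calc ∑ j, (√(q j) + √(p j)) ^ 2 ≤ ∑ j, 2 * (q j + p j) :=
          sum_le_sum fun j _ => by nlinarith [sq_nonneg (√(q j) - √(p j)), hp2 j, hq2 j]
      _ = 4 := by rw [← mul_sum, sum_add_distrib, hps, hqs]; norm_num
  have hnonneg : 0 ≤ ∑ j, |√(q j) - √(p j)| ^ 2 := by positivity
  calc (∑ j, |q j - p j|) ^ 2
      = (∑ j, |√(q j) - √(p j)| * (√(q j) + √(p j))) ^ 2 := by simp only [hfactor]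
    _ ≤ (∑ j, |√(q j) - √(p j)| ^ 2) * ∑ j, (√(q j) + √(p j)) ^ 2 :=
        sum_mul_sq_le_sq_mul_sq _ _ _
    _ ≤ (∑ j, |√(q j) - √(p j)| ^ 2) * 4 := mul_le_mul_of_nonneg_left hsum_sq hnonneg
    _ = 8 * (1 - ∑ j, √(p j * q j)) := by rw [hhellinger]; ring

theorem multinomial_mul_prod_pow_le_exp {ι : Type*} [Fintype ι] {m : ℕ}
    (hm : 0 < m) {k : ι → ℕ} (hk : ∑ j, k j = m) {p : ι → ℝ} (hp : ∀ j, 0 ≤ p j)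
    (hps : ∑ j, p j = 1) :
    (Nat.multinomial univ k : ℝ) * ∏ j, p j ^ k j
      ≤ exp (-(m * (∑ j, |(k j : ℝ) / m - p j|) ^ 2 / 4)) := by
  have hmR : (0 : ℝ) < m := by exact_mod_cast hm
  have hkR : ∑ j, (k j : ℝ) = m := by exact_mod_cast hk
  set q : ι → ℝ := fun j => (k j : ℝ) / m
  have hqs : ∑ j, q j = 1 := by simp only [q, ← sum_div, hkR, div_self hmR.ne']
  have hsqrt j : √(m * p j * k j) = m * √(p j * q j) := by
    rw [show (m : ℝ) * p j * k j = m ^ 2 * (p j * q j) by simp only [q]; field_simp,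
      sqrt_mul (sq_nonneg _), sqrt_sq hmR.le]
  have hexponent :
      ∑ j, (2 * √(m * p j * k j) - 2 * k j) = -(2 * m) * (1 - ∑ j, √(p j * q j)) := by
    simp only [sum_sub_distrib, hsqrt, ← mul_sum, hkR]
    ring
  have hhellinger := sum_abs_sub_sq_le_eight_mul_one_sub_sum_sqrt_mul hp
    (fun j => by positivity : ∀ j, 0 ≤ q j) hps hqs
  calc (Nat.multinomial univ k : ℝ) * ∏ j, p j ^ k j
      ≤ ∏ j, ((m : ℝ) * p j / k j) ^ k j := by
        simpa only [hk] using multinomial_mul_prod_pow_le_prod_div_pow k hp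
    _ ≤ ∏ j, exp (2 * √(m * p j * k j) - 2 * k j) :=
        prod_le_prod (fun j _ => by have := hp j; positivity)
          fun j _ => div_pow_self_le_exp (mul_nonneg hmR.le (hp j)) (k j)
    _ = exp (-(2 * m) * (1 - ∑ j, √(p j * q j))) := by rw [← exp_sum, hexponent]
    _ ≤ exp (-(m * (∑ j, |q j - p j|) ^ 2 / 4)) :=
        exp_le_exp.2 (by nlinarith [mul_le_mul_of_nonneg_left hhellinger hmR.le])

-- A point of `S_d` is a distribution on `d + 1` outcomes with the last weight left implicit;
-- `Fin.cons` puts that weight (and the count `m - ∑ k` of the last outcome) back in front.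
theorem multinomialPMF_eq_multinomial_mul_prod {d m : ℕ} (x : Fin d → ℝ) {k : Fin d → ℕ}
    (hk : ∑ i, k i ≤ m) :
    multinomialPMF d m x k =
      (Nat.multinomial univ (Fin.cons (m - ∑ i, k i) k : Fin (d + 1) → ℕ) : ℝ) *
        ∏ j, (Fin.cons (1 - ∑ i, x i) x : Fin (d + 1) → ℝ) j ^
          (Fin.cons (m - ∑ i, k i) k : Fin (d + 1) → ℕ) j := by
  have hsum : ∑ j, (Fin.cons (m - ∑ i, k i) k : Fin (d + 1) → ℕ) j = m := by
    rw [Fin.sum_cons, Nat.sub_add_cancel hk]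
  have hcoeff : (Nat.multinomial univ (Fin.cons (m - ∑ i, k i) k : Fin (d + 1) → ℕ) : ℝ) =
      m.factorial / ((m - ∑ i, k i).factorial * ∏ i, ((k i).factorial : ℝ)) := by
    rw [eq_div_iff (by positivity)]
    have := Nat.multinomial_spec univ (Fin.cons (m - ∑ i, k i) k : Fin (d + 1) → ℕ)
    simp only [hsum, Fin.prod_univ_succ, Fin.cons_zero, Fin.cons_succ] at this
    exact_mod_cast (mul_comm _ _).trans this
  rw [hcoeff, Fin.prod_univ_succ, multinomialPMF, mul_assoc]
  simp only [Fin.cons_zero, Fin.cons_succ]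

theorem multinomialPMF_le_exp {d m : ℕ} (hm : 0 < m) {x : Fin d → ℝ} (hx : x ∈ simplex d)
    {k : Fin d → ℕ} (hk : k ∈ multiIndex d m) :
    multinomialPMF d m x k ≤ exp (-(m * (∑ i, |(k i : ℝ) / m - x i|) ^ 2 / 4)) := by
  obtain ⟨hx_mem, hx_sum⟩ := hx
  have hk_sum : ∑ i, k i ≤ m := (mem_filter.1 hk).2
  set p : Fin (d + 1) → ℝ := Fin.cons (1 - ∑ i, x i) x
  set k' : Fin (d + 1) → ℕ := Fin.cons (m - ∑ i, k i) k
  have hp : ∀ j, 0 ≤ p j :=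
    Fin.cases (by simpa [p] using hx_sum) fun i => by simpa [p] using (hx_mem i).1
  have hps : ∑ j, p j = 1 := by simp [p, Fin.sum_cons]
  have hk' : ∑ j, k' j = m := by rw [Fin.sum_cons, Nat.sub_add_cancel hk_sum]
  have hdist : ∑ i, |(k i : ℝ) / m - x i| ≤ ∑ j, |(k' j : ℝ) / m - p j| := by
    simp only [k', p, Fin.sum_univ_succ, Fin.cons_zero, Fin.cons_succ]
    exact le_add_of_nonneg_left (abs_nonneg _)
  rw [multinomialPMF_eq_multinomial_mul_prod x hk_sum]
  refine (multinomial_mul_prod_pow_le_exp hm hk' hp hps).trans (exp_le_exp.2 ?_)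
  have := sum_nonneg fun i (_ : i ∈ univ) => abs_nonneg ((k i : ℝ) / m - x i)
  gcongr

theorem card_multiIndex_le (d m : ℕ) : #(multiIndex d m) ≤ (m + 1) ^ d := by
  calc #(multiIndex d m) ≤ #(Fintype.piFinset fun _ : Fin d => range (m + 1)) :=
        card_le_card (filter_subset _ _)
    _ = (m + 1) ^ d := by simp

theorem add_one_pow_le_mul_exp {a : ℝ} (ha : 0 < a) {t : ℝ} (ht : 0 ≤ t) (d : ℕ) :
    (t + 1) ^ d ≤ (1 + 1 / a) ^ d * exp (a * d * t) := by
  have hlin : t + 1 ≤ (1 + 1 / a) * exp (a * t) := by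
    calc t + 1 ≤ (1 + 1 / a) * (1 + a * t) := by
          have : (1 + 1 / a) * (1 + a * t) = t + 1 + (1 / a + a * t) := by field_simp; ring
          rw [this]
          linarith [show 0 ≤ 1 / a + a * t by positivity]
      _ ≤ (1 + 1 / a) * exp (a * t) := by
          gcongr
          linarith [add_one_le_exp (a * t)]
  calc (t + 1) ^ d ≤ ((1 + 1 / a) * exp (a * t)) ^ d := by gcongr
    _ = (1 + 1 / a) ^ d * exp (a * d * t) := by
        rw [mul_pow, ← exp_nat_mul]
        ring_nf

theorem multinomial_concentration_general (d : ℕ) (δ : ℝ) (hδ : 0 < δ) :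
    ∃ c > (0 : ℝ), ∃ C > (0 : ℝ), ∀ m : ℕ, 1 ≤ m → ∀ x ∈ simplex d,
      ∑ k ∈ (multiIndex d m).filter (fun k => δ < ∑ i, |(k i : ℝ) / m - x i|),
          multinomialPMF d m x k
        ≤ C * Real.exp (-c * δ ^ 2 * m) := by
  set a := δ ^ 2 / (8 * (d + 1))
  have ha : 0 < a := by positivity
  have had : a * d ≤ δ ^ 2 / 8 := by
    rw [div_mul_eq_mul_div, div_le_div_iff₀ (by positivity) (by positivity)]
    nlinarith [sq_nonneg δ]
  refine ⟨1 / 8, by norm_num, (1 + 1 / a) ^ d, by positivity, fun m hm x hx => ?_⟩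
  have hmR : (0 : ℝ) < m := by exact_mod_cast hm
  calc ∑ k ∈ (multiIndex d m).filter (fun k => δ < ∑ i, |(k i : ℝ) / m - x i|),
          multinomialPMF d m x k
      ≤ ∑ _k ∈ (multiIndex d m).filter (fun k => δ < ∑ i, |(k i : ℝ) / m - x i|),
          exp (-(m * δ ^ 2 / 4)) := by
        refine sum_le_sum fun k hk => (multinomialPMF_le_exp hm hx (mem_filter.1 hk).1).trans ?_
        have := (mem_filter.1 hk).2
        gcongr
    _ ≤ ((m : ℝ) + 1) ^ d * exp (-(m * δ ^ 2 / 4)) := by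
        rw [sum_const, nsmul_eq_mul]
        gcongr
        exact_mod_cast (card_filter_le _ _).trans (card_multiIndex_le d m)
    _ ≤ (1 + 1 / a) ^ d * exp (a * d * m) * exp (-(m * δ ^ 2 / 4)) := by
        gcongr
        exact add_one_pow_le_mul_exp ha hmR.le d
    _ ≤ (1 + 1 / a) ^ d * exp (-(1 / 8) * δ ^ 2 * m) := by
        rw [mul_assoc, ← exp_add]
        gcongr
        nlinarith [mul_le_mul_of_nonneg_right had hmR.le]

theorem multinomial_concentration (d : ℕ) (hd : 1 ≤ d) (δ : ℝ) (hδ : 0 < δ) :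
    ∃ c > (0 : ℝ), ∃ C > (0 : ℝ), ∀ m : ℕ, 1 ≤ m → ∀ x ∈ simplex d,
      ∑ k ∈ (multiIndex d m).filter (fun k => δ < ∑ i, |(k i : ℝ) / m - x i|),
          multinomialPMF d m x k
        ≤ C * Real.exp (-c * δ ^ 2 * m) :=
  multinomial_concentration_general d δ hδ
end

section
/- Let ξ ~ Binomial(m, x) with x ∈ (0,1). Then ∑_{k=0}^m (Binomial pmf)²(k) = P(ξ = ξ') for an independent copy ξ', and m^{1/2} ∑_{k=0}^m [C(m,k) x^k (1−x)^{m−k}]² → 1/√(4π x(1−x)) as m → ∞. -/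
open scoped BigOperators Classical
open Finset Real Filter MeasureTheory

/-!
With `c k = C(m,k) x^k (1-x)^(m-k)`, the binomial theorem gives
`∑ c k e^{ikt} = (1 - x + x e^{it})^m`, so Parseval on `[-π, π]` turns `2π ∑ (c k)²` into
`∫ g(t)^m dt`, where `g(t) = |1 - x + x e^{it}|² = 1 - 2x(1-x)(1 - cos t)`.
After the substitution `t = s / √m`, the integrand `g(s/√m)^m` tends to `exp(-x(1-x) s²)`
(since `1 - cos t ~ t²/2`) and is dominated by `exp(-4x(1-x) s²/π²)` (since
`cos t ≤ 1 - 2t²/π²` on `[-π, π]`), so by dominated convergence and the Gaussian integral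
`√m ∑ (c k)² → (2π)⁻¹ √(π / (x(1-x))) = 1 / √(4π x(1-x))`.
-/

open Complex (I)
open Topology

lemma integral_exp_nat_mul_I_mul_exp_neg (j k : ℕ) :
    ∫ t in -π..π, Complex.exp (j * t * I) * Complex.exp (-(k * t * I)) =
      if j = k then (2 * π : ℂ) else 0 := by
  split_ifs with hjk
  · subst hjk
    simp [← Complex.exp_add, two_mul]
  · have hn : (((j : ℤ) - k : ℤ) : ℂ) * I ≠ 0 := by simp [sub_eq_zero, hjk]
    have hexp : ∀ t : ℝ, Complex.exp (j * t * I) * Complex.exp (-(k * t * I)) =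
        Complex.exp ((((j : ℤ) - k : ℤ) : ℂ) * I * t) := fun t => by
      rw [← Complex.exp_add]; push_cast; ring_nf
    simp_rw [hexp, integral_exp_mul_complex hn]
    have hper : ((((j : ℤ) - k : ℤ) : ℂ) * I * ((-π : ℝ) : ℂ)) =
        (((j : ℤ) - k : ℤ) : ℂ) * I * (π : ℂ) - ((j : ℤ) - k : ℤ) * (2 * π * I) := by
      push_cast; ring
    rw [hper, Complex.exp_sub, Complex.exp_int_mul_two_pi_mul_I, div_one, sub_self, zero_div]

lemma integral_norm_sq_sum_exp_mul_I (s : Finset ℕ) (c : ℕ → ℂ) :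
    ∫ t in -π..π, ‖∑ k ∈ s, c k * Complex.exp (k * t * I)‖ ^ 2 =
      2 * π * ∑ k ∈ s, ‖c k‖ ^ 2 := by
  have hexpand : ∀ t : ℝ, ((‖∑ k ∈ s, c k * Complex.exp (k * t * I)‖ ^ 2 : ℝ) : ℂ) =
      ∑ j ∈ s, ∑ k ∈ s, c j * (starRingEnd ℂ) (c k) *
        (Complex.exp (j * t * I) * Complex.exp (-(k * t * I))) := fun t => by
    rw [Complex.ofReal_pow, ← Complex.mul_conj', map_sum, Finset.sum_mul_sum]
    refine Finset.sum_congr rfl fun j _ => Finset.sum_congr rfl fun k _ => ?_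
    simp only [map_mul, ← Complex.exp_conj, map_natCast, Complex.conj_ofReal, Complex.conj_I]
    ring_nf
  have hterm : ∀ j k : ℕ, ∫ t in -π..π, c j * (starRingEnd ℂ) (c k) *
      (Complex.exp (j * t * I) * Complex.exp (-(k * t * I))) =
        if j = k then ((2 * π * ‖c j‖ ^ 2 : ℝ) : ℂ) else 0 := fun j k => by
    rw [intervalIntegral.integral_const_mul, integral_exp_nat_mul_I_mul_exp_neg]
    split_ifs with hjk
    · subst hjk; rw [Complex.mul_conj']; push_cast; ring
    · rw [mul_zero]
  have hint : ∀ j k : ℕ, IntervalIntegrable (fun t : ℝ => c j * (starRingEnd ℂ) (c k) *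
      (Complex.exp (j * t * I) * Complex.exp (-(k * t * I)))) volume (-π) π :=
    fun j k => Continuous.intervalIntegrable (by fun_prop) _ _
  apply Complex.ofReal_injective
  rw [← intervalIntegral.integral_ofReal]
  simp_rw [hexpand]
  rw [intervalIntegral.integral_finsetSum fun j _ =>
    Continuous.intervalIntegrable (by fun_prop) _ _]
  simp_rw [intervalIntegral.integral_finsetSum fun k _ => hint _ k, hterm,
    Finset.sum_ite_eq, Complex.ofReal_mul, Complex.ofReal_sum, Finset.mul_sum]
  exact Finset.sum_congr rfl fun j hj => if_pos hj

lemma add_mul_exp_mul_I_pow (a b t : ℝ) (m : ℕ) :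
    ((a : ℂ) + b * Complex.exp (t * I)) ^ m =
      ∑ k ∈ range (m + 1),
        ((m.choose k * b ^ k * a ^ (m - k) : ℝ) : ℂ) * Complex.exp (k * t * I) := by
  rw [add_comm, add_pow]
  refine Finset.sum_congr rfl fun k _ => ?_
  rw [mul_pow, ← Complex.exp_nat_mul]
  push_cast
  ring_nf

lemma norm_sq_add_mul_exp_mul_I (a b t : ℝ) :
    ‖(a : ℂ) + b * Complex.exp (t * I)‖ ^ 2 = a ^ 2 + b ^ 2 + 2 * a * b * cos t := by
  rw [Complex.sq_norm, Complex.normSq_apply]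
  simp only [Complex.add_re, Complex.add_im, Complex.mul_re, Complex.mul_im, Complex.ofReal_re,
    Complex.ofReal_im, Complex.exp_ofReal_mul_I_re, Complex.exp_ofReal_mul_I_im]
  linear_combination b ^ 2 * sin_sq_add_cos_sq t

/-- For `v = x (1 - x)` this is `|1 - x + x e^{it}|²`, the squared modulus of the characteristic
function of a Bernoulli(x) variable. -/
noncomputable def bernoulliCharNormSq (v t : ℝ) : ℝ := 1 - 2 * v * (1 - cos t)

theorem integral_bernoulliCharNormSq_pow (x : ℝ) (m : ℕ) :
    ∫ t in -π..π, bernoulliCharNormSq (x * (1 - x)) t ^ m =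
      2 * π * ∑ k ∈ range (m + 1), ((m.choose k : ℝ) * x ^ k * (1 - x) ^ (m - k)) ^ 2 := by
  have hchar : ∀ t : ℝ, bernoulliCharNormSq (x * (1 - x)) t ^ m =
      ‖((1 - x : ℝ) + x * Complex.exp (t * I)) ^ m‖ ^ 2 := fun t => by
    rw [norm_pow, ← pow_mul, mul_comm m, pow_mul, norm_sq_add_mul_exp_mul_I, bernoulliCharNormSq]
    ring_nf
  simp_rw [hchar, add_mul_exp_mul_I_pow, integral_norm_sq_sum_exp_mul_I, Complex.norm_real,
    Real.norm_eq_abs, sq_abs]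

@[fun_prop]
lemma continuous_bernoulliCharNormSq (v : ℝ) : Continuous (bernoulliCharNormSq v) := by
  unfold bernoulliCharNormSq; fun_prop

lemma bernoulliCharNormSq_nonneg {v : ℝ} (hv₀ : 0 ≤ v) (hv₁ : v ≤ 1 / 4) (t : ℝ) :
    0 ≤ bernoulliCharNormSq v t := by
  unfold bernoulliCharNormSq
  nlinarith [neg_one_le_cos t, cos_le_one t]

lemma bernoulliCharNormSq_le_exp {v t : ℝ} (hv : 0 ≤ v) (ht : |t| ≤ π) :
    bernoulliCharNormSq v t ≤ exp (-(4 * v / π ^ 2) * t ^ 2) := by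
  have hcos := cos_le_one_sub_mul_cos_sq ht
  calc bernoulliCharNormSq v t ≤ -(4 * v / π ^ 2) * t ^ 2 + 1 := by
        unfold bernoulliCharNormSq
        have : 4 * v / π ^ 2 * t ^ 2 = 2 * v * (2 / π ^ 2 * t ^ 2) := by ring
        nlinarith
    _ ≤ exp (-(4 * v / π ^ 2) * t ^ 2) := add_one_le_exp _

lemma bernoulliCharNormSq_div_sqrt_pow_le {v s : ℝ} {m : ℕ} (hv₀ : 0 ≤ v) (hv₁ : v ≤ 1 / 4)
    (hs : |s| ≤ √m * π) :
    bernoulliCharNormSq v (s / √m) ^ m ≤ exp (-(4 * v / π ^ 2) * s ^ 2) := by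
  rcases Nat.eq_zero_or_pos m with rfl | hm
  · simp_all
  have hsqrt : 0 < √(m : ℝ) := by positivity
  calc bernoulliCharNormSq v (s / √m) ^ m
      ≤ exp (-(4 * v / π ^ 2) * (s / √m) ^ 2) ^ m := by
        gcongr
        · exact bernoulliCharNormSq_nonneg hv₀ hv₁ _
        · refine bernoulliCharNormSq_le_exp hv₀ ?_
          rwa [abs_div, abs_of_pos hsqrt, div_le_iff₀' hsqrt]
    _ = exp (-(4 * v / π ^ 2) * s ^ 2) := by
        rw [← exp_nat_mul, div_pow, sq_sqrt (Nat.cast_nonneg m)]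
        field_simp

lemma one_sub_cos_eq_sq_div_two_mul_sinc_sq (t : ℝ) :
    1 - cos t = t ^ 2 / 2 * sinc (t / 2) ^ 2 := by
  rcases eq_or_ne t 0 with rfl | ht
  · simp
  have hcos : cos t = 2 * cos (t / 2) ^ 2 - 1 := by
    rw [← cos_two_mul, mul_div_cancel₀ t two_ne_zero]
  rw [sinc_of_ne_zero (by simpa using ht), hcos]
  field_simp
  linear_combination (-2) * sin_sq_add_cos_sq (t / 2)

lemma tendsto_natCast_mul_one_sub_cos_div_sqrt (s : ℝ) :
    Tendsto (fun m : ℕ => m * (1 - cos (s / √m))) atTop (𝓝 (s ^ 2 / 2)) := by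
  have hsinc : Tendsto (fun m : ℕ => sinc (s / √m / 2)) atTop (𝓝 1) := by
    rw [← sinc_zero]
    refine continuous_sinc.continuousAt.tendsto.comp ?_
    simpa using ((tendsto_const_nhds (x := s)).div_atTop
      (tendsto_sqrt_atTop.comp tendsto_natCast_atTop_atTop)).div_const 2
  have hlim := (hsinc.pow 2).const_mul (s ^ 2 / 2)
  rw [one_pow, mul_one] at hlim
  refine hlim.congr' ?_
  filter_upwards [eventually_gt_atTop 0] with m hm
  rw [one_sub_cos_eq_sq_div_two_mul_sinc_sq, div_pow, sq_sqrt (Nat.cast_nonneg m)]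
  field_simp

lemma tendsto_bernoulliCharNormSq_div_sqrt_pow (v s : ℝ) :
    Tendsto (fun m : ℕ => bernoulliCharNormSq v (s / √m) ^ m) atTop (𝓝 (exp (-v * s ^ 2))) := by
  have h := (tendsto_natCast_mul_one_sub_cos_div_sqrt s).const_mul (-2 * v)
  rw [show -2 * v * (s ^ 2 / 2) = -v * s ^ 2 by ring] at h
  refine (tendsto_one_add_pow_exp_of_tendsto (g := fun m : ℕ => -2 * v * (1 - cos (s / √m)))
    (h.congr fun m => by ring)).congr fun m => ?_
  unfold bernoulliCharNormSq
  ring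

theorem tendsto_integral_bernoulliCharNormSq_div_sqrt_pow {v : ℝ} (hv₀ : 0 < v)
    (hv₁ : v ≤ 1 / 4) :
    Tendsto (fun m : ℕ => ∫ s in -(√m * π)..√m * π, bernoulliCharNormSq v (s / √m) ^ m)
      atTop (𝓝 √(π / v)) := by
  have hbox : ∀ m : ℕ, ∫ s in -(√m * π)..√m * π, bernoulliCharNormSq v (s / √m) ^ m =
      ∫ s, (Set.Ioc (-(√m * π)) (√m * π)).indicator
        (fun s => bernoulliCharNormSq v (s / √m) ^ m) s := fun m => by
    rw [intervalIntegral.integral_of_le (by simp; positivity), integral_indicator measurableSet_Ioc]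
  simp_rw [hbox, ← integral_gaussian]
  refine tendsto_integral_of_dominated_convergence (fun s => exp (-(4 * v / π ^ 2) * s ^ 2))
    (fun m => (Continuous.aestronglyMeasurable (by fun_prop)).indicator measurableSet_Ioc)
    (integrable_exp_neg_mul_sq (by positivity)) (fun m => ?_) ?_
  · refine Eventually.of_forall fun s => ?_
    by_cases hs : s ∈ Set.Ioc (-(√m * π)) (√m * π)
    · rw [Set.indicator_of_mem hs, norm_of_nonneg (pow_nonneg (bernoulliCharNormSq_nonneg
        hv₀.le hv₁ _) _)]
      exact bernoulliCharNormSq_div_sqrt_pow_le hv₀.le hv₁ (abs_le.2 ⟨hs.1.le, hs.2⟩)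
    · rw [Set.indicator_of_notMem hs, norm_zero]
      positivity
  · refine Eventually.of_forall fun s => (tendsto_bernoulliCharNormSq_div_sqrt_pow v s).congr' ?_
    have hrad : Tendsto (fun m : ℕ => √m * π) atTop atTop :=
      (tendsto_sqrt_atTop.comp tendsto_natCast_atTop_atTop).atTop_mul_const pi_pos
    filter_upwards [hrad.eventually_gt_atTop |s|] with m hm
    rw [Set.indicator_of_mem (Set.mem_Ioc.2 ⟨(abs_lt.1 hm).1, (abs_lt.1 hm).2.le⟩)]

lemma inv_two_pi_mul_sqrt_pi_div {v : ℝ} (hv : 0 < v) :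
    (2 * π)⁻¹ * √(π / v) = 1 / √(4 * π * v) := by
  have hsq : √(π / v) * √(4 * π * v) = 2 * π := by
    rw [← sqrt_mul (by positivity), show π / v * (4 * π * v) = (2 * π) ^ 2 by field_simp; ring,
      sqrt_sq (by positivity)]
  rw [eq_div_iff (by positivity), mul_assoc, hsq, inv_mul_cancel₀ (by positivity)]

lemma sqrt_mul_intervalIntegral_eq_integral_div_sqrt (f : ℝ → ℝ) {m : ℕ} (hm : 0 < m) :
    √m * ∫ t in -π..π, f t = ∫ s in -(√m * π)..√m * π, f (s / √m) := by
  have hsqrt : √(m : ℝ) ≠ 0 := by positivity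
  rw [intervalIntegral.integral_comp_div _ hsqrt, neg_div, mul_div_cancel_left₀ _ hsqrt,
    smul_eq_mul]

theorem binomial_squared_sum_asymptotics (x : ℝ) (hx : x ∈ Set.Ioo (0 : ℝ) 1) :
    (∀ m : ℕ,
      (∑ j ∈ Finset.range (m + 1), ∑ k ∈ Finset.range (m + 1),
          (if j = k then ((m.choose j : ℝ) * x ^ j * (1 - x) ^ (m - j)) *
              ((m.choose k : ℝ) * x ^ k * (1 - x) ^ (m - k)) else 0))
        = ∑ k ∈ Finset.range (m + 1),
            ((m.choose k : ℝ) * x ^ k * (1 - x) ^ (m - k)) ^ 2) ∧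
    Filter.Tendsto
      (fun m : ℕ => Real.sqrt m *
        ∑ k ∈ Finset.range (m + 1), ((m.choose k : ℝ) * x ^ k * (1 - x) ^ (m - k)) ^ 2)
      Filter.atTop
      (nhds (1 / Real.sqrt (4 * Real.pi * x * (1 - x)))) := by
  refine ⟨fun m => Finset.sum_congr rfl fun j hj => by rw [Finset.sum_ite_eq, if_pos hj, sq], ?_⟩
  obtain ⟨hx₀, hx₁⟩ := hx
  have hv₀ : 0 < x * (1 - x) := mul_pos hx₀ (sub_pos.2 hx₁)
  have hv₁ : x * (1 - x) ≤ 1 / 4 := by nlinarith [sq_nonneg (2 * x - 1)]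
  rw [mul_assoc _ x, ← inv_two_pi_mul_sqrt_pi_div hv₀]
  refine ((tendsto_integral_bernoulliCharNormSq_div_sqrt_pow hv₀ hv₁).const_mul _).congr' ?_
  filter_upwards [eventually_gt_atTop 0] with m hm
  rw [← sqrt_mul_intervalIntegral_eq_integral_div_sqrt
    (fun t => bernoulliCharNormSq (x * (1 - x)) t ^ m) hm, integral_bernoulliCharNormSq_pow]
  field_simp
end

section
/- Fix λ ≥ 0. Let x_m = λ/m. Then ∑_{k=0}^{m} [C(m,k) x_m^k (1−x_m)^{m−k}]² → e^{−2λ} I₀(2λ) as m → ∞. -/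
open scoped BigOperators Classical
open Finset Real Filter MeasureTheory

/-!
The k-th probability of Binomial(m, λ/m) tends to the Poisson probability e^{-λ} λ^k / k!
(Poisson limit theorem) and, since C(m,k) ≤ m^k / k!, is bounded by λ^k / k!, whose squares are
summable in k.
Tannery's theorem (dominated convergence for series) therefore turns the sum of squared
binomial probabilities into ∑ₖ (e^{-λ} λ^k / k!)² = e^{-2λ} I₀(2λ).
-/

open Topology Nat ProbabilityTheory

lemma choose_mul_pow_mul_one_sub_pow_le {p : ℝ} (hp : p ∈ Set.Icc 0 1) (n k : ℕ) :
    n.choose k * p ^ k * (1 - p) ^ (n - k) ≤ (n * p) ^ k / k ! := by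
  obtain ⟨hp0, hp1⟩ := hp
  calc (n.choose k : ℝ) * p ^ k * (1 - p) ^ (n - k) ≤ n.choose k * p ^ k :=
        mul_le_of_le_one_right (by positivity) (pow_le_one₀ (sub_nonneg.2 hp1) (sub_le_self _ hp0))
    _ ≤ n ^ k / k ! * p ^ k := by gcongr; exact Nat.choose_le_pow_div k n
    _ = (n * p) ^ k / k ! := by ring

lemma summable_sq_pow_div_factorial (x : ℝ) : Summable fun k : ℕ => (x ^ k / k !) ^ 2 := by
  refine (Real.summable_pow_div_factorial (x ^ 2)).of_nonneg_of_le (fun k => by positivity)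
    fun k => ?_
  rw [div_pow, ← pow_mul, mul_comm k, pow_mul]
  gcongr
  exact le_self_pow₀ (mod_cast k.factorial_pos) two_ne_zero

theorem tendsto_sum_sq_choose_mul_pow_of_tendsto_mul {p : ℕ → ℝ} {r : ℝ}
    (hp : ∀ᶠ n in atTop, p n ∈ Set.Icc 0 1) (hr : Tendsto (fun n => n * p n) atTop (𝓝 r)) :
    Tendsto (fun n => ∑ k ∈ range (n + 1), (n.choose k * p n ^ k * (1 - p n) ^ (n - k)) ^ 2)
      atTop (𝓝 (∑' k, (exp (-r) * r ^ k / k !) ^ 2)) := by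
  have hsum_eq_tsum (n : ℕ) :
      ∑ k ∈ range (n + 1), (n.choose k * p n ^ k * (1 - p n) ^ (n - k)) ^ 2
        = ∑' k, (n.choose k * p n ^ k * (1 - p n) ^ (n - k)) ^ 2 := by
    refine (tsum_eq_sum fun k hk => ?_).symm
    rw [Nat.choose_eq_zero_of_lt (by simpa using hk)]
    simp
  simp_rw [hsum_eq_tsum]
  refine tendsto_tsum_of_dominated_convergence (summable_sq_pow_div_factorial (r + 1))
    (fun k => (tendsto_choose_mul_pow_of_tendsto_mul_atTop k hr).pow 2) ?_
  filter_upwards [hp, hr.eventually (gt_mem_nhds (lt_add_one r))] with n hpn hnp k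
  obtain ⟨hp0, hp1⟩ := hpn
  rw [Real.norm_eq_abs, abs_pow, sq_abs]
  calc (n.choose k * p n ^ k * (1 - p n) ^ (n - k)) ^ 2 ≤ ((n * p n) ^ k / k !) ^ 2 := by
        gcongr
        exact choose_mul_pow_mul_one_sub_pow_le ⟨hp0, hp1⟩ n k
    _ ≤ ((r + 1) ^ k / k !) ^ 2 := by gcongr

theorem binomial_squared_sum_boundary (l : ℝ) (hl : 0 ≤ l) :
    Filter.Tendsto
      (fun m : ℕ => ∑ k ∈ Finset.range (m + 1),
        ((m.choose k : ℝ) * (l / m) ^ k * (1 - l / m) ^ (m - k)) ^ 2)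
      Filter.atTop
      (nhds (Real.exp (-2 * l) * ∑' k : ℕ, l ^ (2 * k) / ((k.factorial : ℝ)) ^ 2)) := by
  have hp : ∀ᶠ m : ℕ in atTop, l / m ∈ Set.Icc 0 1 := by
    filter_upwards [eventually_gt_atTop ⌈l⌉₊] with m hm
    have hm0 : (0 : ℝ) < m := by exact_mod_cast (Nat.zero_le _).trans_lt hm
    exact ⟨by positivity, (div_le_one hm0).2 ((Nat.le_ceil l).trans (mod_cast hm.le))⟩
  have hr : Tendsto (fun m : ℕ => m * (l / m)) atTop (𝓝 l) := by
    refine tendsto_const_nhds.congr' ?_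
    filter_upwards [eventually_ne_atTop 0] with m hm
    field_simp
  have hpoisson_sq : ∑' k : ℕ, (exp (-l) * l ^ k / k !) ^ 2
      = exp (-2 * l) * ∑' k : ℕ, l ^ (2 * k) / (k ! : ℝ) ^ 2 := by
    rw [← tsum_mul_left]
    congr 1 with k
    rw [mul_div_assoc, mul_pow, ← exp_nat_mul, div_pow, ← pow_mul, mul_comm k]
    norm_num
  simpa only [hpoisson_sq] using tendsto_sum_sq_choose_mul_pow_of_tendsto_mul hp hr
end

section
/- Fix λ > 0 and let x_m = λ/m. With B_k = C(m,k) x_m^k (1−x_m)^{m−k} the Binomial(m, x_m) probabilities, m ∑_{j,k=0}^m (min(j,k)/m − x_m) B_j B_k → −λ e^{−2λ} (I₀(2λ) + I₁(2λ)) as m → ∞. -/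
open scoped BigOperators Classical
open Finset Real Filter MeasureTheory

/-!
Because the binomial weights sum to one, the expression is `E[min(ξ, ξ')] - λ` for independent
`ξ, ξ' ~ Binomial(m, λ/m)`. The bound `B_k ≤ λ^k/k!` and the Poisson limit theorem give, by dominated
convergence, the limit `E[min(X, Y)] - λ` for independent `X, Y ~ Poisson(λ)`. Writing
`min(j, k) = j - (j - k)₊` and grouping the pairs by `d = j - k` gives
`E[(X - Y)₊] = e^{-2λ} ∑_d d I_d(2λ)`, and the recurrence `λ (I_d - I_{d+2})(2λ) = (d + 1) I_{d+1}(2λ)`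
makes this sum telescope to `λ e^{-2λ} (I₀(2λ) + I₁(2λ))`.
-/

open scoped Nat Topology

noncomputable def besselI (ν : ℕ) (z : ℝ) : ℝ :=
  ∑' k : ℕ, (z / 2) ^ (2 * k + ν) / (k ! * (k + ν)!)

section ExpSeries

variable (x : ℝ)

lemma succ_mul_pow_div_factorial (n : ℕ) :
    ((n + 1 : ℕ) : ℝ) * (x ^ (n + 1) / (n + 1)!) = x * (x ^ n / n !) := by
  rw [Nat.factorial_succ]
  push_cast
  field_simp
  ring

lemma hasSum_pow_div_factorial : HasSum (fun n : ℕ => x ^ n / n !) (exp x) := by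
  rw [exp_eq_exp_ℝ]
  exact NormedSpace.expSeries_div_hasSum_exp x

lemma hasSum_mul_pow_div_factorial :
    HasSum (fun n : ℕ => n * (x ^ n / n !)) (x * exp x) := by
  rw [← hasSum_nat_add_iff' 1]
  simp only [sum_range_one, Nat.cast_zero, zero_mul, sub_zero, succ_mul_pow_div_factorial]
  exact (hasSum_pow_div_factorial x).mul_left x

lemma summable_norm_pow_div_factorial : Summable fun n : ℕ => ‖(x ^ n / n !)‖ := by
  simpa [abs_div, abs_pow] using Real.summable_pow_div_factorial |x|

lemma summable_norm_mul_pow_div_factorial :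
    Summable fun n : ℕ => ‖((n : ℝ) * (x ^ n / n !))‖ := by
  simpa [abs_mul, abs_div, abs_pow] using (hasSum_mul_pow_div_factorial |x|).summable

lemma summable_pow_div_factorial_mul :
    Summable fun p : ℕ × ℕ => x ^ p.1 / p.1 ! * (x ^ p.2 / p.2 !) :=
  summable_mul_of_summable_norm (summable_norm_pow_div_factorial x)
    (summable_norm_pow_div_factorial x)

lemma summable_of_le_fst_mul_pow_div_factorial_mul {w : ℕ × ℕ → ℝ}
    (hw : ∀ p, 0 ≤ w p ∧ w p ≤ p.1) :
    Summable fun p : ℕ × ℕ => w p * (x ^ p.1 / p.1 ! * (x ^ p.2 / p.2 !)) := by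
  refine .of_norm_bounded ((summable_norm_mul_pow_div_factorial x).mul_of_nonneg
    (summable_norm_pow_div_factorial x) (fun _ => norm_nonneg _) fun _ => norm_nonneg _)
    fun p => ?_
  rw [norm_mul, norm_mul, ← mul_assoc, norm_mul, Real.norm_of_nonneg (hw p).1,
    Real.norm_natCast]
  gcongr
  exact (hw p).2

end ExpSeries

section Bessel

variable (y : ℝ)

lemma besselI_two_mul_term (ν k : ℕ) :
    (2 * y / 2) ^ (2 * k + ν) / (k ! * (k + ν)!) = y ^ (k + ν) / (k + ν)! * (y ^ k / k !) := by
  rw [mul_div_cancel_left₀ y two_ne_zero, show 2 * k + ν = k + ν + k by ring, pow_add]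
  field_simp

lemma summable_besselI_terms :
    Summable fun q : ℕ × ℕ => y ^ (q.2 + q.1) / (q.2 + q.1)! * (y ^ q.2 / q.2 !) := by
  have hg : Function.Injective fun q : ℕ × ℕ => (q.2 + q.1, q.2) := fun a b h => by
    simp only [Prod.mk.injEq] at h
    exact Prod.ext (by omega) h.2
  exact (summable_pow_div_factorial_mul y).comp_injective hg |>.congr fun q => rfl

lemma hasSum_besselI_two_mul (ν : ℕ) :
    HasSum (fun k : ℕ => y ^ (k + ν) / (k + ν)! * (y ^ k / k !)) (besselI ν (2 * y)) := by
  simp only [besselI, besselI_two_mul_term]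
  exact ((summable_besselI_terms y).prod_factor ν).hasSum

lemma besselI_two_mul_sub_besselI_add_two (ν : ℕ) :
    y * (besselI ν (2 * y) - besselI (ν + 2) (2 * y)) = (ν + 1) * besselI (ν + 1) (2 * y) := by
  have hshift : HasSum (fun k : ℕ => (k : ℝ) * (y ^ k / k !) * (y ^ (k + ν + 1) / (k + ν + 1)!))
      (y * besselI (ν + 2) (2 * y)) := by
    rw [← hasSum_nat_add_iff' 1]
    simp only [sum_range_one, Nat.cast_zero, zero_mul, sub_zero, succ_mul_pow_div_factorial,
      show ∀ k, k + 1 + ν + 1 = k + (ν + 2) by omega]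
    simpa only [mul_assoc, mul_comm] using (hasSum_besselI_two_mul y (ν + 2)).mul_left y
  rw [mul_sub]
  refine ((((hasSum_besselI_two_mul y ν).mul_left y).sub hshift).congr_fun ?_).unique
    ((hasSum_besselI_two_mul y (ν + 1)).mul_left _)
  intro k
  have h := succ_mul_pow_div_factorial y (k + ν)
  push_cast at h
  linear_combination (y ^ k / k !) * h

lemma hasSum_mul_besselI_two_mul :
    HasSum (fun ν : ℕ => ν * besselI ν (2 * y)) (y * (besselI 0 (2 * y) + besselI 1 (2 * y))) := by
  have hI : HasSum (fun ν => besselI ν (2 * y)) (∑' ν, besselI ν (2 * y)) := by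
    simp only [besselI, besselI_two_mul_term]
    exact (summable_besselI_terms y).prod.hasSum
  have hI2 := (hasSum_nat_add_iff' 2).mpr hI
  rw [← hasSum_nat_add_iff' 1]
  simp only [sum_range_one, Nat.cast_zero, zero_mul, sub_zero, Nat.cast_add_one,
    ← besselI_two_mul_sub_besselI_add_two]
  simpa [sum_range_succ] using (hI.sub hI2).mul_left y

end Bessel

section PoissonPairs

variable (x : ℝ)

lemma tsum_natSub_mul_pow_div_factorial_mul :
    ∑' p : ℕ × ℕ, ((p.1 - p.2 : ℕ) : ℝ) * (x ^ p.1 / p.1 ! * (x ^ p.2 / p.2 !)) =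
      x * (besselI 0 (2 * x) + besselI 1 (2 * x)) := by
  set f : ℕ × ℕ → ℝ := fun p => ((p.1 - p.2 : ℕ) : ℝ) * (x ^ p.1 / p.1 ! * (x ^ p.2 / p.2 !))
  set g : ℕ × ℕ → ℕ × ℕ := fun q => (q.2 + q.1, q.2)
  have hf : Summable f := summable_of_le_fst_mul_pow_div_factorial_mul x fun p =>
    ⟨Nat.cast_nonneg _, Nat.cast_le.mpr (Nat.sub_le _ _)⟩
  have hg : Function.Injective g := fun a b h => by
    simp only [g, Prod.mk.injEq] at h
    exact Prod.ext (by omega) h.2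
  have hsupp : Function.support f ⊆ Set.range g := by
    rintro ⟨j, k⟩ hjk
    have hkj : k ≤ j := by
      by_contra h
      exact hjk (by simp [f, Nat.sub_eq_zero_of_le (by omega : j ≤ k)])
    exact ⟨(j - k, k), by simp only [g, Prod.mk.injEq, and_true]; omega⟩
  have hfg : ∀ q, f (g q) = q.1 * (x ^ (q.2 + q.1) / (q.2 + q.1)! * (x ^ q.2 / q.2 !)) := by
    intro q
    simp [f, g]
  have hs : Summable fun q => f (g q) := hf.comp_injective hg
  rw [← hg.tsum_eq hsupp, hs.tsum_prod' hs.prod_factor]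
  simp only [hfg, tsum_mul_left, (hasSum_besselI_two_mul x _).tsum_eq]
  exact (hasSum_mul_besselI_two_mul x).tsum_eq

lemma tsum_min_mul_pow_div_factorial_mul :
    ∑' p : ℕ × ℕ, min (p.1 : ℝ) p.2 * (x ^ p.1 / p.1 ! * (x ^ p.2 / p.2 !)) =
      x * exp x * exp x - x * (besselI 0 (2 * x) + besselI 1 (2 * x)) := by
  have hmin : ∀ p : ℕ × ℕ, min (p.1 : ℝ) p.2 = p.1 - ((p.1 - p.2 : ℕ) : ℝ) := by
    rintro ⟨j, k⟩
    rcases le_total j k with h | h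
    · simp [h, Nat.sub_eq_zero_of_le h]
    · simp [h, Nat.cast_sub h]
  have hfst := summable_of_le_fst_mul_pow_div_factorial_mul x (w := fun p => p.1) fun p =>
    ⟨Nat.cast_nonneg _, le_rfl⟩
  have hsub := summable_of_le_fst_mul_pow_div_factorial_mul x
    (w := fun p => ((p.1 - p.2 : ℕ) : ℝ)) fun p =>
    ⟨Nat.cast_nonneg _, Nat.cast_le.mpr (Nat.sub_le _ _)⟩
  simp only [hmin, sub_mul]
  rw [hfst.tsum_sub hsub, tsum_natSub_mul_pow_div_factorial_mul,
    ← (hasSum_mul_pow_div_factorial x).tsum_eq, ← (hasSum_pow_div_factorial x).tsum_eq,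
    tsum_mul_tsum_of_summable_norm (summable_norm_mul_pow_div_factorial x)
      (summable_norm_pow_div_factorial x)]
  simp only [mul_assoc]

lemma tsum_min_mul_poisson :
    ∑' p : ℕ × ℕ, min (p.1 : ℝ) p.2 * (exp (-x) * x ^ p.1 / p.1 !) * (exp (-x) * x ^ p.2 / p.2 !) =
      x - x * exp (-2 * x) * (besselI 0 (2 * x) + besselI 1 (2 * x)) := by
  have hfactor : ∀ p : ℕ × ℕ,
      min (p.1 : ℝ) p.2 * (exp (-x) * x ^ p.1 / p.1 !) * (exp (-x) * x ^ p.2 / p.2 !) =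
        exp (-2 * x) * (min (p.1 : ℝ) p.2 * (x ^ p.1 / p.1 ! * (x ^ p.2 / p.2 !))) := by
    intro p
    rw [show -2 * x = -x + -x by ring, exp_add]
    ring
  rw [tsum_congr hfactor, tsum_mul_left, tsum_min_mul_pow_div_factorial_mul]
  have hexp : exp (-2 * x) * (exp x * exp x) = 1 := by
    rw [← exp_add, ← exp_add, show -2 * x + (x + x) = 0 by ring, exp_zero]
  linear_combination x * hexp

end PoissonPairs

section Binomial

noncomputable def binomialWeight (m : ℕ) (x : ℝ) (k : ℕ) : ℝ :=
  m.choose k * x ^ k * (1 - x) ^ (m - k)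

lemma sum_binomialWeight (m : ℕ) (x : ℝ) : ∑ k ∈ range (m + 1), binomialWeight m x k = 1 := by
  have h := (add_pow x (1 - x) m).symm
  rw [add_sub_cancel, one_pow] at h
  rw [← h]
  exact sum_congr rfl fun k _ => by rw [binomialWeight]; ring

lemma binomialWeight_eq_zero_of_lt (x : ℝ) {m k : ℕ} (h : m < k) : binomialWeight m x k = 0 := by
  simp [binomialWeight, Nat.choose_eq_zero_of_lt h]

variable {m : ℕ} {x : ℝ}

lemma binomialWeight_nonneg (hx₀ : 0 ≤ x) (hx₁ : x ≤ 1) (k : ℕ) : 0 ≤ binomialWeight m x k := by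
  have : 0 ≤ 1 - x := by linarith
  unfold binomialWeight
  positivity

lemma binomialWeight_le (hx₀ : 0 ≤ x) (hx₁ : x ≤ 1) (k : ℕ) :
    binomialWeight m x k ≤ (m * x) ^ k / k ! :=
  calc binomialWeight m x k ≤ m.choose k * x ^ k :=
        mul_le_of_le_one_right (by positivity) (pow_le_one₀ (by linarith) (by linarith))
    _ ≤ m ^ k / k ! * x ^ k := by gcongr; exact Nat.choose_le_pow_div k m
    _ = (m * x) ^ k / k ! := by ring

lemma tendsto_binomialWeight (l : ℝ) (k : ℕ) :
    Tendsto (fun m : ℕ => binomialWeight m (l / m) k) atTop (𝓝 (exp (-l) * l ^ k / k !)) := by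
  refine ProbabilityTheory.tendsto_choose_mul_pow_of_tendsto_mul_atTop k
    (tendsto_const_nhds.congr' ?_)
  filter_upwards [eventually_ne_atTop 0] with m hm
  exact (mul_div_cancel₀ l (Nat.cast_ne_zero.mpr hm)).symm

lemma mul_sum_sub_div_mul_binomialWeight (hm : m ≠ 0) (w : ℕ → ℕ → ℝ) (c : ℝ) :
    (m : ℝ) * ∑ j ∈ range (m + 1), ∑ k ∈ range (m + 1),
        (w j k / m - c / m) * binomialWeight m x j * binomialWeight m x k =
      ∑' p : ℕ × ℕ, w p.1 p.2 * binomialWeight m x p.1 * binomialWeight m x p.2 - c := by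
  have hm' : (m : ℝ) ≠ 0 := Nat.cast_ne_zero.mpr hm
  have hB := sum_binomialWeight m x
  have hvanish : ∀ p ∉ range (m + 1) ×ˢ range (m + 1),
      w p.1 p.2 * binomialWeight m x p.1 * binomialWeight m x p.2 = 0 := by
    rintro ⟨j, k⟩ hp
    simp only [mem_product, mem_range, not_and_or, not_lt] at hp
    rcases hp with h | h <;> simp [binomialWeight_eq_zero_of_lt x (Nat.lt_of_succ_le h)]
  rw [tsum_eq_sum hvanish, sum_product, mul_sum]
  calc ∑ j ∈ range (m + 1), (m : ℝ) * ∑ k ∈ range (m + 1),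
        (w j k / m - c / m) * binomialWeight m x j * binomialWeight m x k
      = ∑ j ∈ range (m + 1), ∑ k ∈ range (m + 1),
          (w j k * binomialWeight m x j * binomialWeight m x k -
            c * binomialWeight m x j * binomialWeight m x k) := by
        refine sum_congr rfl fun j _ => ?_
        rw [mul_sum]
        refine sum_congr rfl fun k _ => ?_
        field_simp
    _ = _ := by
        simp only [sum_sub_distrib, ← mul_sum, ← sum_mul, hB]
        ring

lemma tendsto_tsum_min_mul_binomialWeight {l : ℝ} (hl : 0 ≤ l) :
    Tendsto (fun m : ℕ => ∑' p : ℕ × ℕ,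
        min (p.1 : ℝ) p.2 * binomialWeight m (l / m) p.1 * binomialWeight m (l / m) p.2) atTop
      (𝓝 (∑' p : ℕ × ℕ,
        min (p.1 : ℝ) p.2 * (exp (-l) * l ^ p.1 / p.1 !) * (exp (-l) * l ^ p.2 / p.2 !))) := by
  refine tendsto_tsum_of_dominated_convergence
    (bound := fun p => p.1 * (l ^ p.1 / p.1 ! * (l ^ p.2 / p.2 !)))
    (summable_of_le_fst_mul_pow_div_factorial_mul l (w := fun p => p.1) fun p =>
      ⟨Nat.cast_nonneg _, le_rfl⟩)
    (fun p => ((tendsto_binomialWeight l p.1).const_mul _).mul (tendsto_binomialWeight l p.2)) ?_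
  filter_upwards [eventually_ge_atTop ⌈l⌉₊, eventually_ne_atTop 0] with m hlm hm p
  have hx₀ : 0 ≤ l / m := by positivity
  have hx₁ : l / m ≤ 1 := div_le_one_of_le₀ (Nat.ceil_le.mp hlm) (Nat.cast_nonneg _)
  have hml : (m : ℝ) * (l / m) = l := mul_div_cancel₀ _ (Nat.cast_ne_zero.mpr hm)
  have hB₁ := binomialWeight_nonneg (m := m) hx₀ hx₁ p.1
  have hB₂ := binomialWeight_nonneg (m := m) hx₀ hx₁ p.2
  rw [Real.norm_of_nonneg (by positivity), mul_assoc]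
  gcongr
  · exact min_le_left _ _
  · exact (binomialWeight_le hx₀ hx₁ p.1).trans_eq (by rw [hml])
  · exact (binomialWeight_le hx₀ hx₁ p.2).trans_eq (by rw [hml])

end Binomial

theorem binomial_min_boundary_asymptotics (l : ℝ) (hl : 0 < l) :
    Filter.Tendsto
      (fun m : ℕ => (m : ℝ) *
        ∑ j ∈ Finset.range (m + 1), ∑ k ∈ Finset.range (m + 1),
          ((min j k : ℝ) / m - l / m) *
            ((m.choose j : ℝ) * (l / m) ^ j * (1 - l / m) ^ (m - j)) *
            ((m.choose k : ℝ) * (l / m) ^ k * (1 - l / m) ^ (m - k)))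
      Filter.atTop
      (nhds (-(l * Real.exp (-2 * l) *
        ((∑' k : ℕ, l ^ (2 * k) / ((k.factorial : ℝ)) ^ 2) +
         (∑' k : ℕ, l ^ (2 * k + 1) / ((k.factorial : ℝ) * ((k + 1).factorial : ℝ))))))) := by
  have hI₀ : besselI 0 (2 * l) = ∑' k : ℕ, l ^ (2 * k) / ((k.factorial : ℝ)) ^ 2 :=
    tsum_congr fun k => by simp [sq]
  have hI₁ : besselI 1 (2 * l) =
      ∑' k : ℕ, l ^ (2 * k + 1) / ((k.factorial : ℝ) * ((k + 1).factorial : ℝ)) :=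
    tsum_congr fun k => by simp
  have hlim := (tendsto_tsum_min_mul_binomialWeight hl.le).sub_const l
  rw [tsum_min_mul_poisson, hI₀, hI₁, sub_sub_cancel_left] at hlim
  refine hlim.congr' ?_
  filter_upwards [eventually_ne_atTop 0] with m hm
  exact (mul_sum_sub_div_mul_binomialWeight hm (fun j k => min (j : ℝ) k) l).symm
end

section
/- For x ∈ Int(S_d) fixed, ∑_{k ∈ ℕ₀^d ∩ (m−1)S_d} P³_{k,m−1}(x) = O(m^{−d}) as m → ∞. -/
/-!
Add the implicit last cell `1 - ∑ x` to get a multinomial law with `d + 1` positive cell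
probabilities `pᵢ`. By the upper Stirling bound `n! ≤ e √n (n/e)ⁿ`, the multinomial probability of
`K` is at most `e √n` times the product of the Poisson(`n pᵢ`) probabilities of the `Kᵢ`, and a
Poisson(`λ`) probability is at most `1/√λ`. Hence every `P_{k,n}(x)` is `O(n^{-d/2})`, and
`∑ P³ ≤ (max P)² ∑ P = (max P)² = O(m^{-d})`.
-/

open scoped BigOperators Classical
open Finset Real Filter MeasureTheory

open Nat

theorem factorial_le_exp_one_mul_sqrt_mul_div_exp_pow {n : ℕ} (hn : n ≠ 0) :
    (n ! : ℝ) ≤ exp 1 * √n * (n / exp 1) ^ n := by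
  obtain ⟨m, rfl⟩ := Nat.exists_eq_succ_of_ne_zero hn
  have hseq : Stirling.stirlingSeq (m + 1) ≤ exp 1 / √2 := by
    simpa [Stirling.stirlingSeq_one] using Stirling.stirlingSeq'_antitone (Nat.zero_le m)
  have hpos : 0 < √(2 * (m + 1 : ℕ)) * ((m + 1 : ℕ) / exp 1) ^ (m + 1) := by positivity
  rw [Stirling.stirlingSeq, div_le_iff₀ hpos] at hseq
  calc ((m + 1) ! : ℝ) ≤ exp 1 / √2 * (√(2 * (m + 1 : ℕ)) * ((m + 1 : ℕ) / exp 1) ^ (m + 1)) :=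
        hseq
    _ = exp 1 * √(m + 1 : ℕ) * ((m + 1 : ℕ) / exp 1) ^ (m + 1) := by
        rw [Real.sqrt_mul zero_le_two]; field_simp

theorem pow_mul_exp_neg_le (N : ℕ) {y : ℝ} (hy : 0 ≤ y) :
    y ^ N * exp (-y) ≤ (N : ℝ) ^ N * exp (-N) := by
  rcases eq_or_ne N 0 with rfl | hN
  · simpa using hy
  have hNpos : (0 : ℝ) < N := by positivity
  have hbase : y / N ≤ exp (y / N - 1) := by linarith [add_one_le_exp (y / N - 1)]
  have hpow : (y / N) ^ N ≤ exp (y - N) := by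
    calc (y / N) ^ N ≤ exp (y / N - 1) ^ N := pow_le_pow_left₀ (by positivity) hbase N
      _ = exp (y - N) := by rw [← exp_nat_mul]; congr 1; field_simp
  calc y ^ N * exp (-y) = (N : ℝ) ^ N * (y / N) ^ N * exp (-y) := by
        rw [div_pow]; field_simp
    _ ≤ (N : ℝ) ^ N * exp (y - N) * exp (-y) := by gcongr
    _ = (N : ℝ) ^ N * exp (-N) := by rw [mul_assoc, ← exp_add]; ring_nf

theorem div_exp_pow_mul_succ_div_exp_pow_le_factorial_sq (k : ℕ) :
    (k / exp 1) ^ k * ((k + 1 : ℕ) / exp 1) ^ (k + 1) ≤ (k ! : ℝ) ^ 2 := by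
  rcases eq_or_ne k 0 with rfl | hk
  · simpa using inv_le_one_of_one_le₀ (one_le_exp zero_le_one)
  have hk1 : (1 : ℝ) ≤ k := by exact_mod_cast Nat.one_le_iff_ne_zero.mpr hk
  have hstirling := mul_le_mul (Stirling.le_factorial_stirling k)
    (Stirling.le_factorial_stirling (k + 1)) (by positivity) (by positivity)
  rw [Nat.factorial_succ, Nat.cast_mul] at hstirling
  have hsqrt : ((k + 1 : ℕ) : ℝ) ≤ √(2 * π * k) * √(2 * π * (k + 1 : ℕ)) := by
    rw [← Real.sqrt_mul (by positivity)]
    apply Real.le_sqrt_of_sq_le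
    have h1 : 6 * (k : ℝ) ≤ 2 * π * k := by nlinarith [pi_gt_three]
    have h2 : 6 * ((k : ℝ) + 1) ≤ 2 * π * (k + 1) := by nlinarith [pi_gt_three]
    push_cast
    nlinarith [mul_le_mul h1 h2 (by positivity) (by positivity)]
  refine le_of_mul_le_mul_left ?_ (by positivity : (0 : ℝ) < (k + 1 : ℕ))
  calc ((k + 1 : ℕ) : ℝ) * ((k / exp 1) ^ k * ((k + 1 : ℕ) / exp 1) ^ (k + 1))
      ≤ √(2 * π * k) * √(2 * π * (k + 1 : ℕ))
          * ((k / exp 1) ^ k * ((k + 1 : ℕ) / exp 1) ^ (k + 1)) := by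
        gcongr
    _ ≤ _ := by nlinarith [hstirling]

noncomputable def poissonProb (r : ℝ) (k : ℕ) : ℝ :=
  exp (-r) * r ^ k / k !

theorem sqrt_mul_poissonProb_le_one (k : ℕ) {r : ℝ} (hr : 0 ≤ r) :
    √r * poissonProb r k ≤ 1 := by
  -- `(√r · poissonProb r k)² = (rᵏ e⁻ʳ)(rᵏ⁺¹ e⁻ʳ) / k!²`, and the two factors peak at `r = k`
  -- and `r = k + 1`.
  have hsq : (√r * poissonProb r k) ^ 2
      = (r ^ k * exp (-r)) * (r ^ (k + 1) * exp (-r)) / (k ! : ℝ) ^ 2 := by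
    rw [poissonProb, mul_pow, Real.sq_sqrt hr]; ring
  have key : (r ^ k * exp (-r)) * (r ^ (k + 1) * exp (-r)) ≤ (k ! : ℝ) ^ 2 := by
    calc (r ^ k * exp (-r)) * (r ^ (k + 1) * exp (-r))
        ≤ ((k : ℝ) ^ k * exp (-k)) * (((k + 1 : ℕ) : ℝ) ^ (k + 1) * exp (-(k + 1 : ℕ))) :=
          mul_le_mul (pow_mul_exp_neg_le k hr) (pow_mul_exp_neg_le (k + 1) hr)
            (by positivity) (by positivity)
      _ = (k / exp 1) ^ k * ((k + 1 : ℕ) / exp 1) ^ (k + 1) := by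
          rw [div_pow, div_pow, exp_one_pow, exp_one_pow, exp_neg, exp_neg]; ring
      _ ≤ (k ! : ℝ) ^ 2 := div_exp_pow_mul_succ_div_exp_pow_le_factorial_sq k
  have : (√r * poissonProb r k) ^ 2 ≤ 1 ^ 2 := by
    rw [hsq, one_pow, div_le_one (by positivity)]
    exact key
  exact (abs_le_of_sq_le_sq' this zero_le_one).2

section Multinomial

variable {ι : Type*} [Fintype ι] {p : ι → ℝ}

theorem multinomial_mul_prod_pow_le_one (hp : ∀ i, 0 ≤ p i) (hp1 : ∑ i, p i = 1)
    {n : ℕ} {K : ι → ℕ} (hK : ∑ i, K i = n) :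
    (multinomial univ K : ℝ) * ∏ i, p i ^ K i ≤ 1 := by
  have h := sum_pow_eq_sum_piAntidiag univ p n
  rw [hp1, one_pow] at h
  rw [h]
  exact single_le_sum (f := fun K : ι → ℕ => (multinomial univ K : ℝ) * ∏ i, p i ^ K i)
    (fun _ _ => mul_nonneg (Nat.cast_nonneg _) (prod_nonneg fun i _ => pow_nonneg (hp i) _))
    (mem_piAntidiag.2 ⟨hK, fun i _ => mem_univ i⟩)

theorem multinomial_mul_prod_pow_le_mul_prod_poissonProb (hp : ∀ i, 0 ≤ p i)
    (hp1 : ∑ i, p i = 1) {n : ℕ} (hn : n ≠ 0) {K : ι → ℕ} (hK : ∑ i, K i = n) :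
    (multinomial univ K : ℝ) * ∏ i, p i ^ K i ≤ exp 1 * √n * ∏ i, poissonProb (n * p i) (K i) := by
  have hmult : (multinomial univ K : ℝ) = n ! / ∏ i, ((K i)! : ℝ) := by
    rw [eq_div_iff (by positivity), mul_comm, ← hK]
    exact_mod_cast multinomial_spec univ K
  have hexp : ∏ i, exp (-(n * p i)) = exp (-n) := by
    rw [← exp_sum, sum_neg_distrib, ← mul_sum, hp1, mul_one]
  have hpow : ∏ i, ((n : ℝ) * p i) ^ K i = n ^ n * ∏ i, p i ^ K i := by
    rw [← hK, ← prod_pow_eq_pow_sum, ← prod_mul_distrib]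
    simp only [mul_pow]
  have hprod : ∏ i, poissonProb (n * p i) (K i)
      = (n / exp 1) ^ n * ((∏ i, p i ^ K i) / ∏ i, ((K i)! : ℝ)) := by
    simp only [poissonProb]
    rw [prod_div_distrib, prod_mul_distrib, hexp, hpow, div_pow, exp_one_pow, exp_neg]
    ring
  have hA : 0 ≤ (∏ i, p i ^ K i) / ∏ i, ((K i)! : ℝ) :=
    div_nonneg (prod_nonneg fun i _ => pow_nonneg (hp i) _) (prod_nonneg fun _ _ => by positivity)
  calc (multinomial univ K : ℝ) * ∏ i, p i ^ K i
      = n ! * ((∏ i, p i ^ K i) / ∏ i, ((K i)! : ℝ)) := by rw [hmult]; ring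
    _ ≤ exp 1 * √n * (n / exp 1) ^ n * ((∏ i, p i ^ K i) / ∏ i, ((K i)! : ℝ)) :=
        mul_le_mul_of_nonneg_right (factorial_le_exp_one_mul_sqrt_mul_div_exp_pow hn) hA
    _ = exp 1 * √n * ∏ i, poissonProb (n * p i) (K i) := by rw [hprod]; ring

theorem multinomial_mul_prod_pow_le_div_sqrt_pow (hp : ∀ i, 0 < p i)
    (hp1 : ∑ i, p i = 1) {n : ℕ} (hn : n ≠ 0) {K : ι → ℕ} (hK : ∑ i, K i = n) :
    (multinomial univ K : ℝ) * ∏ i, p i ^ K i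
      ≤ exp 1 / (∏ i, √(p i)) / √n ^ (Fintype.card ι - 1) := by
  obtain ⟨i₀, -⟩ := nonempty_of_sum_ne_zero (s := univ) (f := p) (by rw [hp1]; exact one_ne_zero)
  obtain ⟨D, hD⟩ := Nat.exists_eq_succ_of_ne_zero (Fintype.card_pos_iff.2 ⟨i₀⟩).ne'
  have hn' : (0 : ℝ) < n := by positivity
  have hpoisson : ∀ i, poissonProb (n * p i) (K i) ≤ 1 / √(n * p i) := by
    intro i
    have := hp i
    rw [le_div_iff₀' (by positivity)]
    exact sqrt_mul_poissonProb_le_one (K i) (by positivity)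
  calc (multinomial univ K : ℝ) * ∏ i, p i ^ K i
      ≤ exp 1 * √n * ∏ i, poissonProb (n * p i) (K i) :=
        multinomial_mul_prod_pow_le_mul_prod_poissonProb (fun i => (hp i).le) hp1 hn hK
    _ ≤ exp 1 * √n * ∏ i, (1 / √(n * p i)) := by
        refine mul_le_mul_of_nonneg_left (prod_le_prod (fun i _ => ?_) fun i _ => hpoisson i)
          (by positivity)
        have := hp i
        exact div_nonneg (by positivity) (by positivity)
    _ = exp 1 / (∏ i, √(p i)) / √n ^ (Fintype.card ι - 1) := by
        simp only [Real.sqrt_mul hn'.le, one_div, prod_inv_distrib, prod_mul_distrib, prod_const,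
          Finset.card_univ, hD, Nat.succ_sub_one, pow_succ]
        have : 0 < √(n : ℝ) := Real.sqrt_pos.2 hn'
        have : 0 < ∏ i, √(p i) := prod_pos fun i _ => Real.sqrt_pos.2 (hp i)
        field_simp

theorem exists_multinomial_mul_prod_pow_le_div_sqrt_succ_pow (hp : ∀ i, 0 < p i)
    (hp1 : ∑ i, p i = 1) :
    ∃ C > 0, ∀ (n : ℕ) (K : ι → ℕ), ∑ i, K i = n →
      (multinomial univ K : ℝ) * ∏ i, p i ^ K i ≤ C / √(n + 1) ^ (Fintype.card ι - 1) := by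
  set A := exp 1 / (∏ i, √(p i)) * √2 ^ (Fintype.card ι - 1)
  refine ⟨max 1 A, one_pos.trans_le (le_max_left _ _), fun n K hK => ?_⟩
  rcases eq_or_ne n 0 with rfl | hn
  · simpa using (multinomial_mul_prod_pow_le_one (fun i => (hp i).le) hp1 hK).trans
      (le_max_left 1 A)
  have hn1 : (1 : ℝ) ≤ n := by exact_mod_cast Nat.one_le_iff_ne_zero.2 hn
  have hsucc : √(n + 1) ≤ √2 * √n := by
    rw [← Real.sqrt_mul zero_le_two]
    exact Real.sqrt_le_sqrt (by linarith)
  calc (multinomial univ K : ℝ) * ∏ i, p i ^ K i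
      ≤ exp 1 / (∏ i, √(p i)) / √n ^ (Fintype.card ι - 1) :=
        multinomial_mul_prod_pow_le_div_sqrt_pow hp hp1 hn hK
    _ = A / (√2 * √n) ^ (Fintype.card ι - 1) := by
        rw [mul_pow, ← div_div, mul_div_cancel_right₀ _ (by positivity)]
    _ ≤ A / √(n + 1) ^ (Fintype.card ι - 1) := by gcongr
    _ ≤ max 1 A / √(n + 1) ^ (Fintype.card ι - 1) := by gcongr; exact le_max_right _ _

end Multinomial

theorem sum_pow_three_le_sq_mul_sum {α : Type*} {s : Finset α} {f : α → ℝ} {a : ℝ}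
    (hf : ∀ i ∈ s, 0 ≤ f i) (ha : ∀ i ∈ s, f i ≤ a) :
    ∑ i ∈ s, f i ^ 3 ≤ a ^ 2 * ∑ i ∈ s, f i := by
  rw [mul_sum]
  refine sum_le_sum fun i hi => ?_
  calc f i ^ 3 = f i ^ 2 * f i := by ring
    _ ≤ a ^ 2 * f i :=
        mul_le_mul_of_nonneg_right (pow_le_pow_left₀ (hf i hi) (ha i hi) 2) (hf i hi)

section Simplex

variable {d : ℕ}

/-- A point `x` of the simplex as a probability vector on `d + 1` cells: the implicit last
coordinate `1 - ∑ x` is the value at `none`. -/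
def simplexWeight (x : Fin d → ℝ) : Option (Fin d) → ℝ :=
  fun o => o.elim (1 - ∑ i, x i) x

/-- The value `n - ∑ k` at `none` is truncated: meaningful only when `∑ k ≤ n`. -/
def simplexCount (n : ℕ) (k : Fin d → ℕ) : Option (Fin d) → ℕ :=
  fun o => o.elim (n - ∑ i, k i) k

theorem sum_simplexWeight (x : Fin d → ℝ) : ∑ o, simplexWeight x o = 1 := by
  simp [simplexWeight, Fintype.sum_option]

theorem sum_simplexCount {n : ℕ} {k : Fin d → ℕ} (hk : ∑ i, k i ≤ n) :
    ∑ o, simplexCount n k o = n := by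
  simp only [simplexCount, Fintype.sum_option, Option.elim]
  omega

theorem mem_multiIndex {n : ℕ} {k : Fin d → ℕ} : k ∈ multiIndex d n ↔ ∑ i, k i ≤ n := by
  simp only [multiIndex, mem_filter, Fintype.mem_piFinset, mem_range, and_iff_right_iff_imp]
  exact fun hk i =>
    Nat.lt_succ_of_le ((single_le_sum (fun j _ => Nat.zero_le (k j)) (mem_univ i)).trans hk)

theorem multinomialPMF_eq {n : ℕ} (x : Fin d → ℝ) {k : Fin d → ℕ} (hk : ∑ i, k i ≤ n) :
    multinomialPMF d n x k
      = (multinomial univ (simplexCount n k) : ℝ)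
          * ∏ o, simplexWeight x o ^ simplexCount n k o := by
  have hmult : (multinomial univ (simplexCount n k) : ℝ)
      = n ! / ∏ o, ((simplexCount n k o)! : ℝ) := by
    rw [eq_div_iff (by positivity), mul_comm]
    conv_rhs => rw [← sum_simplexCount hk]
    exact_mod_cast multinomial_spec univ (simplexCount n k)
  rw [hmult, multinomialPMF, Fintype.prod_option, Fintype.prod_option]
  simp only [simplexCount, simplexWeight, Option.elim]
  ring

theorem sum_multinomialPMF (n : ℕ) (x : Fin d → ℝ) :
    ∑ k ∈ multiIndex d n, multinomialPMF d n x k = 1 := by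
  have h := sum_pow_eq_sum_piAntidiag univ (simplexWeight x) n
  rw [sum_simplexWeight, one_pow] at h
  rw [h]
  refine sum_nbij' (simplexCount n) (fun K i => K (some i)) (fun k hk => ?_) (fun K hK => ?_)
    (fun k _ => rfl) (fun K hK => ?_) (fun k hk => multinomialPMF_eq x (mem_multiIndex.1 hk))
  · exact mem_piAntidiag.2 ⟨sum_simplexCount (mem_multiIndex.1 hk), fun i _ => mem_univ i⟩
  · rw [mem_piAntidiag, Fintype.sum_option] at hK
    exact mem_multiIndex.2 (by omega)
  · rw [mem_piAntidiag, Fintype.sum_option] at hK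
    funext o
    cases o with
    | none => simp only [simplexCount, Option.elim]; omega
    | some i => rfl

end Simplex

theorem multinomial_cubed_sum_interior_bound_general (d : ℕ)
    (x : Fin d → ℝ) (hx0 : ∀ i, 0 < x i) (hx1 : ∑ i, x i < 1) :
    ∃ C > (0 : ℝ), ∀ m : ℕ, 1 ≤ m →
      ∑ k ∈ multiIndex d (m - 1), (multinomialPMF d (m - 1) x k) ^ 3
        ≤ C / (m : ℝ) ^ d := by
  have hw : ∀ o, 0 < simplexWeight x o := by
    rintro (_ | i)
    exacts [sub_pos.2 hx1, hx0 i]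
  obtain ⟨C, hC0, hC⟩ :=
    exists_multinomial_mul_prod_pow_le_div_sqrt_succ_pow hw (sum_simplexWeight x)
  refine ⟨C ^ 2, by positivity, fun m hm => ?_⟩
  have hm' : ((m - 1 : ℕ) : ℝ) + 1 = m := by rw [← Nat.cast_add_one, Nat.sub_add_cancel hm]
  have hbound : ∀ k ∈ multiIndex d (m - 1), multinomialPMF d (m - 1) x k ≤ C / √m ^ d := by
    intro k hk
    rw [multinomialPMF_eq x (mem_multiIndex.1 hk)]
    simpa [hm'] using hC (m - 1) _ (sum_simplexCount (mem_multiIndex.1 hk))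
  have hnonneg : ∀ k ∈ multiIndex d (m - 1), 0 ≤ multinomialPMF d (m - 1) x k := by
    intro k hk
    rw [multinomialPMF_eq x (mem_multiIndex.1 hk)]
    exact mul_nonneg (Nat.cast_nonneg _) (prod_nonneg fun o _ => pow_nonneg (hw o).le _)
  calc ∑ k ∈ multiIndex d (m - 1), multinomialPMF d (m - 1) x k ^ 3
      ≤ (C / √m ^ d) ^ 2 * ∑ k ∈ multiIndex d (m - 1), multinomialPMF d (m - 1) x k :=
        sum_pow_three_le_sq_mul_sum hnonneg hbound
    _ = C ^ 2 / (m : ℝ) ^ d := by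
        rw [sum_multinomialPMF, mul_one, div_pow, ← pow_mul, mul_comm, pow_mul,
          Real.sq_sqrt (Nat.cast_nonneg m)]

theorem multinomial_cubed_sum_interior_bound (d : ℕ) (hd : 1 ≤ d)
    (x : Fin d → ℝ) (hx0 : ∀ i, 0 < x i) (hx1 : ∑ i, x i < 1) :
    ∃ C > (0 : ℝ), ∀ m : ℕ, 1 ≤ m →
      ∑ k ∈ multiIndex d (m - 1), (multinomialPMF d (m - 1) x k) ^ 3
        ≤ C / (m : ℝ) ^ d :=
  multinomial_cubed_sum_interior_bound_general d x hx0 hx1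
end
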